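/- Let f be an A-diffeomorphism of a closed surface M² whose non-wandering set is a finite disjoint union of closed nowhere dense invariant sets Λ₁,…,Λ_k each of which is a one-dimensional attractor (i.e., Λᵢ = W^u(Λᵢ) and Λᵢ is nowhere dense), and suppose M² = ⋃ᵢ W^u(Λᵢ). Then we reach a contradiction: such f cannot exist. -/

import Mathlib

theorem iUnion_ne_univ_of_isNowhereDense {X ι : Type*} [TopologicalSpace X] [BaireSpace X]
    [Nonempty X] [Countable ι] {s : ι → Set X} (hs : ∀ i, IsNowhereDense (s i)) :
    (⋃ i, s i) ≠ Set.univ := fun hcover =>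
  not_isMeagre_of_isOpen isOpen_univ Set.univ_nonempty <|
    hcover ▸ isMeagre_iUnion fun i => (hs i).isMeagre

theorem stmt9_general {M : Type*} [MetricSpace M] [CompactSpace M] [Nonempty M]
    (k : ℕ) (Λ : Fin k → Set M) (Wu : Fin k → Set M)
    (hnd : ∀ i, IsNowhereDense (Λ i))
    (hattr : ∀ i, Wu i = Λ i)
    (hcover : (⋃ i, Wu i) = Set.univ) : False := by
  obtain rfl : Wu = Λ := funext hattr
  exact iUnion_ne_univ_of_isNowhereDense hnd hcover

/-- Suppose `f` is an A-diffeomorphism of a closed surface `M²` whose non-wandering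
set is a finite disjoint union of closed nowhere dense invariant sets `Λ₁, …, Λ_k`,
each a one-dimensional attractor, i.e. `Λᵢ = W^u(Λᵢ)` and `Λᵢ` is nowhere dense,
and suppose `M² = ⋃ᵢ W^u(Λᵢ)`. This is impossible (Baire category theorem). -/
theorem stmt9 {M : Type*} [MetricSpace M] [CompactSpace M] [Nonempty M]
    [ChartedSpace (EuclideanSpace ℝ (Fin 2)) M]
    (f : M ≃ₜ M) (k : ℕ) (Λ : Fin k → Set M) (Wu : Fin k → Set M)
    (hinv : ∀ i, f '' Λ i = Λ i)
    (hclosed : ∀ i, IsClosed (Λ i))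
    (hnd : ∀ i, IsNowhereDense (Λ i))
    (hdisj : Pairwise (Function.onFun Disjoint Λ))
    (hattr : ∀ i, Wu i = Λ i)
    (hcover : (⋃ i, Wu i) = Set.univ) : False :=
  stmt9_general k Λ Wu hnd hattr hcover
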